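/- arXiv:2102.00698 — 2 statements merged into one kernel-verified Lean document; each statement's English description precedes it below -/
import Mathlib

section
/- Let x, y ∈ V with x ≠ y, and let f ∈ Lip_w^1(V) satisfy ⟨f, δ_x − δ_y⟩ = d(x,y). Then κ̄(x,y) ≤ ⟨𝓛⁰f, δ_x − δ_y⟩ / d(x,y); in particular κ̄(x,y) < ∞. -/
/-!
Since `f` is 1-Lipschitz, `KD_λ(x,y) ≥ ⟨J_λ f, δ_x - δ_y⟩`, and `⟨f, δ_x - δ_y⟩ = d(x,y)`
turns this into `κ_λ(x,y)/λ ≤ ⟨𝓛_λ f, δ_x - δ_y⟩ / d(x,y)` for the Yosida approximation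
`𝓛_λ f = (f - J_λ f)/λ`. So it suffices that `𝓛_λ f → 𝓛⁰f` as `λ ↓ 0`, the finite-dimensional
version of a classical fact for maximal monotone operators. `𝓛` is the monotone subdifferential
of the convex energy `Q(D⁻¹·)`; the resolvent exists by minimizing `‖g - f‖² + 2λ Q(D⁻¹g)`,
which makes `I + 𝓛` onto and hence `𝓛` maximal monotone (Minty). Monotonicity gives
`‖𝓛_λ f‖ ≤ ‖𝓛⁰f‖`, and any cluster point of `𝓛_λ f` then lies in `𝓛(f)` with norm at most
`‖𝓛⁰f‖`, so it is the unique minimal-norm element `𝓛⁰f`.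
-/

open scoped BigOperators

noncomputable section

namespace HypRicci

variable {V : Type*} [Fintype V] [DecidableEq V]

/-- A finite weighted hypergraph on vertex set `V`: a finite set of nonempty
hyperedges together with positive weights. -/
structure Hypergraph (V : Type*) [Fintype V] [DecidableEq V] : Type _ where
  E : Finset (Finset V)
  w : Finset V → ℝ
  w_pos : ∀ e ∈ E, 0 < w e
  e_nonempty : ∀ e ∈ E, e.Nonempty

/-- Degree `d_x = ∑_{e ∋ x} w(e)`. -/
def deg (H : Hypergraph V) (x : V) : ℝ := ∑ e ∈ H.E, if x ∈ e then H.w e else 0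

/-- Volume `vol(V) = ∑_x d_x`. -/
def vol (H : Hypergraph V) : ℝ := ∑ x, deg H x

/-- Weighted inner product `⟨f,g⟩ = ∑_x f(x) g(x) / d_x`. -/
def inn (H : Hypergraph V) (f g : V → ℝ) : ℝ := ∑ x, f x * g x / deg H x

/-- Norm associated to `inn`. -/
def nrm (H : Hypergraph V) (f : V → ℝ) : ℝ := Real.sqrt (inn H f f)

/-- Indicator function `δ_x`. -/
def delta (x : V) : V → ℝ := fun z => if z = x then 1 else 0

/-- Standard (unweighted) dot product `u^⊤ v`. -/
def dot (u v : V → ℝ) : ℝ := ∑ x, u x * v x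

/-- Base polytope `B_e = conv{δ_x − δ_y : x,y ∈ e}`. -/
def Bp (e : Finset V) : Set (V → ℝ) :=
  convexHull ℝ {b : V → ℝ | ∃ x ∈ e, ∃ y ∈ e, b = delta x - delta y}

/-- The multivalued hypergraph Laplacian
`L(f) = {∑_e w(e) (b_e^⊤ f) b_e : b_e ∈ argmax_{b ∈ B_e} b^⊤ f}`. -/
def Lap (H : Hypergraph V) (f : V → ℝ) : Set (V → ℝ) :=
  { g | ∃ b : Finset V → (V → ℝ),
      (∀ e ∈ H.E, b e ∈ Bp e ∧ ∀ b' ∈ Bp e, dot b' f ≤ dot (b e) f) ∧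
      g = ∑ e ∈ H.E, (H.w e * dot (b e) f) • b e }

/-- `D⁻¹ f`. -/
def Dinv (H : Hypergraph V) (f : V → ℝ) : V → ℝ := fun x => f x / deg H x

/-- Normalized Laplacian `𝓛(f) = L(D⁻¹ f)`. -/
def NL (H : Hypergraph V) (f : V → ℝ) : Set (V → ℝ) := Lap H (Dinv H f)

/-- The resolvent `J_λ = (I + λ𝓛)⁻¹`: it sends `f` to the (unique) `g` with
`f ∈ g + λ 𝓛(g)`. -/
def Resolvent (H : Hypergraph V) (l : ℝ) (f : V → ℝ) : V → ℝ :=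
  Classical.epsilon fun g => ∃ h ∈ NL H g, f = g + l • h

/-- Adjacency: `x ∼ y` iff some hyperedge contains both. -/
def Adj (H : Hypergraph V) (x y : V) : Prop := ∃ e ∈ H.E, x ∈ e ∧ y ∈ e

/-- There is a chain of length `n` of successively adjacent vertices from `x` to `y`. -/
def chainProp (H : Hypergraph V) (x y : V) (n : ℕ) : Prop :=
  ∃ z : ℕ → V, z 0 = x ∧ z n = y ∧ ∀ i < n, Adj H (z i) (z (i + 1))

/-- Connectedness of the hypergraph. -/
def Connected (H : Hypergraph V) : Prop := ∀ x y : V, ∃ n, chainProp H x y n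

/-- Graph distance (as a natural number). -/
def hdistN (H : Hypergraph V) (x y : V) : ℕ := sInf {n | chainProp H x y n}

/-- Graph distance `d(x,y)` as a real number. -/
def gdist (H : Hypergraph V) (x y : V) : ℝ := (hdistN H x y : ℝ)

/-- Diameter `diam(H) = max_{x,y} d(x,y)`. -/
def hdiam (H : Hypergraph V) : ℝ :=
  (((Finset.univ : Finset (V × V)).sup fun p => hdistN H p.1 p.2 : ℕ) : ℝ)

/-- Weighted `1`-Lipschitz functions: `⟨f, δ_x − δ_y⟩ ≤ d(x,y)` for all `x, y`. -/
def Lip1 (H : Hypergraph V) : Set (V → ℝ) :=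
  { f | ∀ x y : V, inn H f (delta x - delta y) ≤ gdist H x y }

/-- The `λ`-nonlinear Kantorovich difference. -/
def KD (H : Hypergraph V) (l : ℝ) (x y : V) : ℝ :=
  sSup { r | ∃ f ∈ Lip1 H, r = inn H (Resolvent H l f) (delta x - delta y) }

/-- `κ_λ(x,y) = 1 − KD_λ(x,y)/d(x,y)`. -/
def kappa (H : Hypergraph V) (l : ℝ) (x y : V) : ℝ := 1 - KD H l x y / gdist H x y

/-- Lower coarse Ricci curvature `κ̲(x,y) = liminf_{λ↓0} κ_λ(x,y)/λ`. -/
def kappaLower (H : Hypergraph V) (x y : V) : EReal :=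
  Filter.liminf (fun l : ℝ => ((kappa H l x y / l : ℝ) : EReal)) (nhdsWithin 0 (Set.Ioi 0))

/-- Upper coarse Ricci curvature `κ̄(x,y) = limsup_{λ↓0} κ_λ(x,y)/λ`. -/
def kappaUpper (H : Hypergraph V) (x y : V) : EReal :=
  Filter.limsup (fun l : ℝ => ((kappa H l x y / l : ℝ) : EReal)) (nhdsWithin 0 (Set.Ioi 0))

/-- Canonical restriction `𝓛⁰ f`: the unique element of minimal norm of `𝓛(f)`. -/
def L0 (H : Hypergraph V) (f : V → ℝ) : V → ℝ :=
  Classical.epsilon fun g => g ∈ NL H f ∧ ∀ h ∈ NL H f, nrm H g ≤ nrm H h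

/-- The stationary distribution `π(x) = d_x / vol(V)`. -/
def piH (H : Hypergraph V) : V → ℝ := fun x => deg H x / vol H

/-- The energy `Q(h) = (1/2) ∑_e w(e) max_{x,y ∈ e} (h(x) − h(y))²`. -/
def Qform (H : Hypergraph V) (h : V → ℝ) : ℝ :=
  (1 / 2) * ∑ e ∈ H.E, H.w e * sSup { r | ∃ x ∈ e, ∃ y ∈ e, r = (h x - h y) ^ 2 }

open Filter Topology

section

variable {H : Hypergraph V}

section InnerProduct

lemma inn_comm (f g : V → ℝ) : inn H f g = inn H g f := by
  simp only [inn, mul_comm]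

lemma inn_eq_dot_Dinv (f g : V → ℝ) : inn H f g = dot f (Dinv H g) := by
  simp only [inn, dot, Dinv, mul_div_assoc]

lemma inn_add_left (f g h : V → ℝ) : inn H (f + g) h = inn H f h + inn H g h := by
  simp only [inn, Pi.add_apply, add_mul, add_div, Finset.sum_add_distrib]

lemma inn_sub_left (f g h : V → ℝ) : inn H (f - g) h = inn H f h - inn H g h := by
  simp only [inn, Pi.sub_apply, sub_mul, sub_div, Finset.sum_sub_distrib]

lemma inn_smul_left (c : ℝ) (f h : V → ℝ) : inn H (c • f) h = c * inn H f h := by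
  simp only [inn, Pi.smul_apply, smul_eq_mul, Finset.mul_sum, mul_assoc, mul_div_assoc]

lemma inn_add_right (f g h : V → ℝ) : inn H f (g + h) = inn H f g + inn H f h := by
  rw [inn_comm, inn_add_left, inn_comm g, inn_comm h]

lemma inn_sub_right (f g h : V → ℝ) : inn H f (g - h) = inn H f g - inn H f h := by
  rw [inn_comm, inn_sub_left, inn_comm g, inn_comm h]

lemma inn_smul_right (c : ℝ) (f h : V → ℝ) : inn H f (c • h) = c * inn H f h := by
  rw [inn_comm, inn_smul_left, inn_comm]

lemma inn_zero_left (h : V → ℝ) : inn H 0 h = 0 := by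
  simp [inn]

lemma inn_delta_sub_delta (f : V → ℝ) (a b : V) :
    inn H f (delta a - delta b) = Dinv H f a - Dinv H f b := by
  simp [inn, Dinv, delta, mul_sub, sub_div, Finset.sum_sub_distrib, ite_div]

lemma continuous_inn_left (g : V → ℝ) : Continuous fun f : V → ℝ => inn H f g := by
  unfold inn; fun_prop

lemma continuous_inn_self : Continuous fun f : V → ℝ => inn H f f := by
  unfold inn; fun_prop

lemma nrm_nonneg (f : V → ℝ) : 0 ≤ nrm H f :=
  Real.sqrt_nonneg _

variable (hdeg : ∀ x, 0 < deg H x)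
include hdeg

lemma sq_div_deg_le_inn_self (f : V → ℝ) (z : V) : f z * f z / deg H z ≤ inn H f f :=
  Finset.single_le_sum (f := fun x => f x * f x / deg H x)
    (fun x _ => div_nonneg (mul_self_nonneg _) (hdeg x).le) (Finset.mem_univ z)

lemma inn_self_nonneg (f : V → ℝ) : 0 ≤ inn H f f :=
  Finset.sum_nonneg fun x _ => div_nonneg (mul_self_nonneg _) (hdeg x).le

lemma inn_self_eq_zero {f : V → ℝ} : inn H f f = 0 ↔ f = 0 := by
  refine ⟨fun h => funext fun z => ?_, fun h => h ▸ inn_zero_left 0⟩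
  have hz := (Finset.sum_eq_zero_iff_of_nonneg
    fun x _ => div_nonneg (mul_self_nonneg (f x)) (hdeg x).le).1 h z (Finset.mem_univ z)
  simpa [(hdeg z).ne'] using hz

lemma sq_nrm (f : V → ℝ) : nrm H f ^ 2 = inn H f f :=
  Real.sq_sqrt (inn_self_nonneg hdeg f)

lemma inn_le_nrm_mul_nrm (f g : V → ℝ) : inn H f g ≤ nrm H f * nrm H g := by
  have hsqrt : ∀ u v : V → ℝ,
      inn H u v = ∑ x, u x / √(deg H x) * (v x / √(deg H x)) := fun u v =>
    Finset.sum_congr rfl fun x _ => by rw [div_mul_div_comm, Real.mul_self_sqrt (hdeg x).le]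
  simp only [nrm, hsqrt, ← sq]
  exact Real.sum_mul_le_sqrt_mul_sqrt _ _ _

lemma isCompact_inn_sub_le (f : V → ℝ) (r : ℝ) :
    IsCompact {g : V → ℝ | inn H (g - f) (g - f) ≤ r} := by
  refine (isCompact_univ_pi fun z => isCompact_Icc (a := f z - √(r * deg H z))
    (b := f z + √(r * deg H z))).of_isClosed_subset
    (isClosed_le ((continuous_inn_self).comp (continuous_sub_right f)) continuous_const) ?_
  intro g hg z _
  have hsq : (g z - f z) ^ 2 ≤ r * deg H z := by
    have := (div_le_iff₀ (hdeg z)).1 ((sq_div_deg_le_inn_self hdeg (g - f) z).trans hg)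
    simpa [sq] using this
  have := abs_le.1 (Real.abs_le_sqrt hsq)
  constructor <;> linarith [this.1, this.2]

end InnerProduct

section Oscillation

section General

variable {ι : Type*}

/-- The maximum of `b ↦ b ⬝ u` on `B_e`. -/
def osc (e : Finset ι) (u : ι → ℝ) : ℝ :=
  sSup ((fun p : ι × ι => u p.1 - u p.2) '' ↑(e ×ˢ e))

variable {e : Finset ι}

lemma osc_eq_sup' (he : e.Nonempty) (u : ι → ℝ) :
    osc e u = (e ×ˢ e).sup' (he.product he) fun p => u p.1 - u p.2 :=
  (Finset.sup'_eq_csSup_image _ _ _).symm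

lemma sub_le_osc {x y : ι} (hx : x ∈ e) (hy : y ∈ e) (u : ι → ℝ) :
    u x - u y ≤ osc e u := by
  rw [osc_eq_sup' ⟨x, hx⟩]
  exact Finset.le_sup' (fun p : ι × ι => u p.1 - u p.2) (b := (x, y))
    (Finset.mem_product.2 ⟨hx, hy⟩)

lemma exists_osc_eq (he : e.Nonempty) (u : ι → ℝ) :
    ∃ x ∈ e, ∃ y ∈ e, osc e u = u x - u y := by
  obtain ⟨p, hp, hmax⟩ :=
    Finset.exists_mem_eq_sup' (he.product he) fun p : ι × ι => u p.1 - u p.2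
  obtain ⟨hx, hy⟩ := Finset.mem_product.1 hp
  exact ⟨p.1, hx, p.2, hy, osc_eq_sup' he u ▸ hmax⟩

lemma osc_nonneg (he : e.Nonempty) (u : ι → ℝ) : 0 ≤ osc e u := by
  obtain ⟨x, hx⟩ := he
  simpa using sub_le_osc hx hx u

lemma osc_const (he : e.Nonempty) (c : ℝ) : osc e (fun _ => c) = 0 := by
  simp [osc_eq_sup' he]

lemma continuous_osc (he : e.Nonempty) : Continuous (osc e) := by
  rw [funext (osc_eq_sup' he)]
  exact Continuous.finset_sup'_apply _ fun p _ => (continuous_apply p.1).sub (continuous_apply p.2)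

end General

variable {e : Finset V}

omit [DecidableEq V] in
lemma isLinearMap_dot_left (u : V → ℝ) : IsLinearMap ℝ fun b : V → ℝ => dot b u :=
  ⟨fun b b' => by simp [dot, add_mul, Finset.sum_add_distrib],
    fun c b => by simp [dot, Finset.mul_sum, mul_assoc]⟩

lemma dot_delta_sub_delta (x y : V) (u : V → ℝ) : dot (delta x - delta y) u = u x - u y := by
  simp [dot, delta, sub_mul, Finset.sum_sub_distrib]

omit [Fintype V] in
lemma delta_sub_delta_mem_Bp {x y : V} (hx : x ∈ e) (hy : y ∈ e) : delta x - delta y ∈ Bp e :=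
  subset_convexHull ℝ _ ⟨x, hx, y, hy, rfl⟩

omit [Fintype V] in
lemma isCompact_Bp (e : Finset V) : IsCompact (Bp e) := by
  have hfin : {b : V → ℝ | ∃ x ∈ e, ∃ y ∈ e, b = delta x - delta y}.Finite := by
    refine ((e ×ˢ e).finite_toSet.image fun p : V × V => delta p.1 - delta p.2).subset ?_
    rintro _ ⟨x, hx, y, hy, rfl⟩
    exact ⟨(x, y), Finset.mem_product.2 ⟨hx, hy⟩, rfl⟩
  exact hfin.isCompact_convexHull (𝕜 := ℝ)

lemma dot_le_osc_of_mem_Bp {b : V → ℝ} (hb : b ∈ Bp e) (u : V → ℝ) :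
    dot b u ≤ osc e u := by
  refine convexHull_min ?_ (convex_halfSpace_le (isLinearMap_dot_left u) (osc e u)) hb
  rintro _ ⟨x, hx, y, hy, rfl⟩
  exact (dot_delta_sub_delta x y u).trans_le (sub_le_osc hx hy u)

/-- The admissible `b_e` in the definition of `L(u)`. -/
def argmaxBp (e : Finset V) (u : V → ℝ) : Set (V → ℝ) :=
  {b | b ∈ Bp e ∧ ∀ b' ∈ Bp e, dot b' u ≤ dot b u}

lemma mem_argmaxBp_iff (he : e.Nonempty) {u b : V → ℝ} :
    b ∈ argmaxBp e u ↔ b ∈ Bp e ∧ dot b u = osc e u := by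
  obtain ⟨x, hx, y, hy, hxy⟩ := exists_osc_eq he u
  refine ⟨fun hb => ⟨hb.1, (dot_le_osc_of_mem_Bp hb.1 u).antisymm ?_⟩,
    fun hb => ⟨hb.1, ?_⟩⟩
  · simpa only [hxy, dot_delta_sub_delta] using hb.2 _ (delta_sub_delta_mem_Bp hx hy)
  · exact fun b' hb' => hb.2 ▸ dot_le_osc_of_mem_Bp hb' u

lemma argmaxBp_nonempty (he : e.Nonempty) (u : V → ℝ) : (argmaxBp e u).Nonempty := by
  obtain ⟨x, hx, y, hy, hxy⟩ := exists_osc_eq he u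
  exact ⟨_, (mem_argmaxBp_iff he).2
    ⟨delta_sub_delta_mem_Bp hx hy, by rw [dot_delta_sub_delta, hxy]⟩⟩

lemma argmaxBp_eq_inter (he : e.Nonempty) (u : V → ℝ) :
    argmaxBp e u = Bp e ∩ {b | dot b u = osc e u} :=
  Set.ext fun _ => mem_argmaxBp_iff he

lemma convex_argmaxBp (he : e.Nonempty) (u : V → ℝ) : Convex ℝ (argmaxBp e u) := by
  rw [argmaxBp_eq_inter he]
  exact (convex_convexHull ℝ _).inter (convex_hyperplane (isLinearMap_dot_left u) _)

lemma isCompact_argmaxBp (he : e.Nonempty) (u : V → ℝ) : IsCompact (argmaxBp e u) := by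
  rw [argmaxBp_eq_inter he]
  exact (isCompact_Bp e).inter_right
    (isClosed_eq (isLinearMap_dot_left u).mk'.continuous_of_finiteDimensional continuous_const)

end Oscillation

section Laplacian

omit [DecidableEq V] in
lemma dot_sum_smul {ι : Type*} (s : Finset ι) (c : ι → ℝ) (b : ι → V → ℝ)
    (u : V → ℝ) :
    dot (∑ i ∈ s, c i • b i) u = ∑ i ∈ s, c i * dot (b i) u := by
  simp only [dot, Finset.sum_apply, Pi.smul_apply, smul_eq_mul, Finset.sum_mul, Finset.mul_sum,
    mul_assoc]
  exact Finset.sum_comm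

lemma mem_NL_iff {f h : V → ℝ} : h ∈ NL H f ↔ ∃ b : Finset V → V → ℝ,
    (∀ e ∈ H.E, b e ∈ argmaxBp e (Dinv H f)) ∧
      h = ∑ e ∈ H.E, (H.w e * osc e (Dinv H f)) • b e := by
  refine exists_congr fun b => and_congr_right fun hb => ?_
  rw [Finset.sum_congr rfl fun e he => by
    rw [((mem_argmaxBp_iff (H.e_nonempty e he)).1 (hb e he)).2]]

lemma NL_eq_image (f : V → ℝ) :
    NL H f = (fun b : H.E → V → ℝ => ∑ e : H.E, (H.w e * osc e.1 (Dinv H f)) • b e) ''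
      Set.univ.pi fun e => argmaxBp e.1 (Dinv H f) := by
  ext h
  rw [mem_NL_iff]
  constructor
  · rintro ⟨b, hb, rfl⟩
    exact ⟨fun e : H.E => b e, fun e _ => hb e e.2,
      Finset.sum_coe_sort H.E fun e => (H.w e * osc e (Dinv H f)) • b e⟩
  · rintro ⟨b, hb, rfl⟩
    refine ⟨fun e => if he : e ∈ H.E then b ⟨e, he⟩ else 0,
      fun e he => by simpa [he] using hb ⟨e, he⟩ trivial, ?_⟩
    rw [← Finset.sum_coe_sort H.E]
    simp only [Finset.coe_mem, dite_true]

lemma isCompact_NL (f : V → ℝ) : IsCompact (NL H f) := by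
  rw [NL_eq_image]
  exact (isCompact_univ_pi fun e : H.E => isCompact_argmaxBp (H.e_nonempty e e.2) _).image
    (continuous_finsetSum _ fun e _ => (continuous_apply e).fun_const_smul _)

lemma NL_nonempty (f : V → ℝ) : (NL H f).Nonempty := by
  rw [NL_eq_image]
  exact (Set.univ_pi_nonempty_iff.2 fun e : H.E => argmaxBp_nonempty (H.e_nonempty e e.2) _).image _

lemma convex_NL (f : V → ℝ) : Convex ℝ (NL H f) := by
  rw [NL_eq_image]
  refine (convex_pi fun e : H.E => fun _ => convex_argmaxBp (H.e_nonempty e e.2) _).is_linear_image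
    ⟨fun b b' => ?_, fun a b => ?_⟩
  · simp [smul_add, Finset.sum_add_distrib]
  · simp [Finset.smul_sum, smul_comm a]

lemma dot_Dinv_of_mem_NL {f h : V → ℝ} (hh : h ∈ NL H f) :
    dot h (Dinv H f) = ∑ e ∈ H.E, H.w e * (osc e (Dinv H f) * osc e (Dinv H f)) := by
  obtain ⟨b, hb, rfl⟩ := mem_NL_iff.1 hh
  rw [dot_sum_smul]
  refine Finset.sum_congr rfl fun e he => ?_
  rw [((mem_argmaxBp_iff (H.e_nonempty e he)).1 (hb e he)).2, mul_assoc]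

lemma dot_le_of_mem_NL {f h : V → ℝ} (hh : h ∈ NL H f) (u : V → ℝ) :
    dot h u ≤ ∑ e ∈ H.E, H.w e * (osc e (Dinv H f) * osc e u) := by
  obtain ⟨b, hb, rfl⟩ := mem_NL_iff.1 hh
  rw [dot_sum_smul]
  refine Finset.sum_le_sum fun e he => ?_
  rw [mul_assoc]
  exact mul_le_mul_of_nonneg_left (mul_le_mul_of_nonneg_left
    (dot_le_osc_of_mem_Bp (hb e he).1 u) (osc_nonneg (H.e_nonempty e he) _)) (H.w_pos e he).le

theorem NL_monotone {f₁ f₂ h₁ h₂ : V → ℝ} (hh₁ : h₁ ∈ NL H f₁)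
    (hh₂ : h₂ ∈ NL H f₂) :
    0 ≤ inn H (h₁ - h₂) (f₁ - f₂) := by
  set a := fun e => osc e (Dinv H f₁)
  set c := fun e => osc e (Dinv H f₂)
  have hsq : 0 ≤ ∑ e ∈ H.E, H.w e * (a e * a e) - ∑ e ∈ H.E, H.w e * (a e * c e)
      - ∑ e ∈ H.E, H.w e * (c e * a e) + ∑ e ∈ H.E, H.w e * (c e * c e) := by
    simp only [← Finset.sum_sub_distrib, ← Finset.sum_add_distrib]
    exact Finset.sum_nonneg fun e he => by nlinarith [H.w_pos e he, sq_nonneg (a e - c e)]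
  rw [inn_sub_left, inn_sub_right, inn_sub_right]
  simp only [inn_eq_dot_Dinv]
  linarith [dot_Dinv_of_mem_NL hh₁, dot_le_of_mem_NL hh₁ (Dinv H f₂),
    dot_le_of_mem_NL hh₂ (Dinv H f₁), dot_Dinv_of_mem_NL hh₂]

end Laplacian

section MinimalNorm

variable (hdeg : ∀ x, 0 < deg H x)
include hdeg

lemma nrm_le_of_inn_self_le {u w : V → ℝ} (h : inn H u u ≤ inn H w u) :
    nrm H u ≤ nrm H w := by
  have hcs := inn_le_nrm_mul_nrm hdeg w u
  rw [← sq_nrm hdeg] at h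
  nlinarith [nrm_nonneg (H := H) u, nrm_nonneg (H := H) w]

lemma eq_of_nrm_le_of_forall_nrm_le {S : Set (V → ℝ)} (hS : Convex ℝ S) {g h : V → ℝ}
    (hg : g ∈ S) (hmin : ∀ h' ∈ S, nrm H g ≤ nrm H h') (hh : h ∈ S)
    (hle : nrm H h ≤ nrm H g) :
    h = g := by
  have hsq : ∀ u v : V → ℝ, nrm H u ≤ nrm H v → inn H u u ≤ inn H v v := fun u v huv => by
    rw [← sq_nrm hdeg, ← sq_nrm hdeg]
    exact pow_le_pow_left₀ (Real.sqrt_nonneg _) huv 2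
  have hhalf : (0 : ℝ) ≤ 1 / 2 := by norm_num
  have hmid := hsq _ _ (hmin _ (hS hh hg hhalf hhalf (by norm_num)))
  have hhg := hsq _ _ hle
  rw [← sub_eq_zero, ← inn_self_eq_zero hdeg]
  refine le_antisymm ?_ (inn_self_nonneg hdeg _)
  simp only [inn_add_left, inn_add_right, inn_sub_left, inn_sub_right, inn_smul_left,
    inn_smul_right, inn_comm g h] at hmid ⊢
  linarith

omit hdeg in
lemma L0_spec (f : V → ℝ) :
    L0 H f ∈ NL H f ∧ ∀ h ∈ NL H f, nrm H (L0 H f) ≤ nrm H h := by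
  obtain ⟨g, hg, hmin⟩ := (isCompact_NL f).exists_isMinOn (NL_nonempty f)
    (Real.continuous_sqrt.comp (continuous_inn_self (H := H))).continuousOn
  have hex : ∃ g, g ∈ NL H f ∧ ∀ h ∈ NL H f, nrm H g ≤ nrm H h :=
    ⟨g, hg, fun h hh => hmin hh⟩
  exact Classical.epsilon_spec hex

lemma eq_L0_of_nrm_le {f h : V → ℝ} (hh : h ∈ NL H f) (hle : nrm H h ≤ nrm H (L0 H f)) :
    h = L0 H f :=
  eq_of_nrm_le_of_forall_nrm_le hdeg (convex_NL f) (L0_spec f).1 (L0_spec f).2 hh hle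

end MinimalNorm

section FirstOrder

variable {ι : Type*}

theorem exists_eventually_sup'_add_mul_le {s : Finset ι} (hs : s.Nonempty) (α β : ι → ℝ) :
    ∃ i ∈ s, α i = s.sup' hs α ∧
      ∀ᶠ t in 𝓝[>] (0 : ℝ),
        s.sup' hs (fun j => α j + t * β j) ≤ s.sup' hs α + t * β i := by
  set M := s.sup' hs α
  set A := s.filter fun j => α j = M
  have hA : A.Nonempty := by
    obtain ⟨j, hj, hjM⟩ := Finset.exists_mem_eq_sup' hs α
    exact ⟨j, Finset.mem_filter.2 ⟨hj, hjM.symm⟩⟩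
  obtain ⟨i, hiA, hiβ⟩ := Finset.exists_mem_eq_sup' hA β
  obtain ⟨his, hiM⟩ := Finset.mem_filter.1 hiA
  refine ⟨i, his, hiM, ?_⟩
  have hle : ∀ j ∈ s, ∀ᶠ t in 𝓝[>] (0 : ℝ), α j + t * β j ≤ M + t * β i := by
    intro j hj
    by_cases hjM : α j = M
    · have hβ : β j ≤ β i :=
        (Finset.le_sup' β (Finset.mem_filter.2 ⟨hj, hjM⟩)).trans_eq hiβ
      filter_upwards [self_mem_nhdsWithin] with t (ht : 0 < t)
      nlinarith
    -- Off the maximizing set `α j` stays below `M` by a fixed margin, which beats `t * β`.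
    · have hlt : α j < M := (Finset.le_sup' α hj).lt_of_ne hjM
      have hlim : Tendsto (fun t : ℝ => t * (β j - β i)) (𝓝[>] 0) (𝓝 0) := by
        simpa using ((continuous_mul_const (β j - β i)).tendsto 0).mono_left nhdsWithin_le_nhds
      filter_upwards [hlim.eventually_lt_const (sub_pos.2 hlt)] with t ht
      linarith
  filter_upwards [(eventually_all_finset s).2 hle] with t ht
  exact Finset.sup'_le _ _ ht

lemma nonneg_of_eventually_nonneg_mul_add_sq {G C : ℝ}
    (h : ∀ᶠ t in 𝓝[>] (0 : ℝ), 0 ≤ t * G + t ^ 2 * C) : 0 ≤ G := by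
  by_contra hG
  have hlim : Tendsto (fun t : ℝ => G + t * C) (𝓝[>] 0) (𝓝 G) := by
    have hcont : Continuous fun t : ℝ => G + t * C := by fun_prop
    simpa using (hcont.tendsto 0).mono_left nhdsWithin_le_nhds
  obtain ⟨t, ht, htG, htpos⟩ :=
    (h.and ((hlim.eventually_lt_const (not_le.1 hG)).and self_mem_nhdsWithin)).exists
  nlinarith [mul_neg_of_pos_of_neg (show (0 : ℝ) < t from htpos) htG]

lemma sq_le_sq_add_mul_add_sq {a b c d t : ℝ} (hb : 0 ≤ b) (hba : b ≤ a + t * d)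
    (hdc : |d| ≤ c) :
    b ^ 2 ≤ a ^ 2 + 2 * t * (a * d) + t ^ 2 * c ^ 2 := by
  have hsq : b ^ 2 ≤ (a + t * d) ^ 2 := pow_le_pow_left₀ hb hba 2
  have hd : d ^ 2 ≤ c ^ 2 := sq_le_sq' (abs_le.1 hdc).1 (abs_le.1 hdc).2
  nlinarith [mul_le_mul_of_nonneg_left hd (sq_nonneg t)]

lemma abs_sub_le_osc {e : Finset ι} {x y : ι} (hx : x ∈ e) (hy : y ∈ e) (u : ι → ℝ) :
    |u x - u y| ≤ osc e u :=
  abs_sub_le_iff.2 ⟨sub_le_osc hx hy u, sub_le_osc hy hx u⟩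

lemma exists_osc_eq_eventually_osc_add_smul_le {e : Finset ι} (he : e.Nonempty)
    (u w : ι → ℝ) :
    ∃ x ∈ e, ∃ y ∈ e, osc e u = u x - u y ∧
      ∀ᶠ t in 𝓝[>] (0 : ℝ), osc e (u + t • w) ≤ osc e u + t * (w x - w y) := by
  obtain ⟨p, hp, hpu, hev⟩ := exists_eventually_sup'_add_mul_le (he.product he)
    (fun p => u p.1 - u p.2) (fun p => w p.1 - w p.2)
  obtain ⟨hx, hy⟩ := Finset.mem_product.1 hp
  refine ⟨p.1, hx, p.2, hy, (osc_eq_sup' he u).trans hpu.symm, ?_⟩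
  filter_upwards [hev] with t ht
  rw [osc_eq_sup' he, osc_eq_sup' he]
  refine le_of_eq_of_le (congrArg _ (funext fun q => ?_)) ht
  simp only [Pi.add_apply, Pi.smul_apply, smul_eq_mul]
  ring

end FirstOrder

section Resolvent

/-- The convex potential of `𝓛`: `energy H g = Q(D⁻¹ g)`. -/
def energy (H : Hypergraph V) (g : V → ℝ) : ℝ :=
  (1 / 2) * ∑ e ∈ H.E, H.w e * osc e (Dinv H g) ^ 2

lemma energy_nonneg (g : V → ℝ) : 0 ≤ energy H g :=
  mul_nonneg (by norm_num)
    (Finset.sum_nonneg fun e he => mul_nonneg (H.w_pos e he).le (sq_nonneg _))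

lemma continuous_Dinv : Continuous (Dinv H) :=
  continuous_pi fun x => (continuous_apply x).div_const _

lemma continuous_energy : Continuous (energy H) :=
  continuous_const.mul (continuous_finsetSum _ fun e he =>
    continuous_const.mul (((continuous_osc (H.e_nonempty e he)).comp continuous_Dinv).pow 2))

lemma Dinv_add_smul (g v : V → ℝ) (t : ℝ) :
    Dinv H (g + t • v) = Dinv H g + t • Dinv H v :=
  funext fun x => by
    simp only [Dinv, Pi.add_apply, Pi.smul_apply, smul_eq_mul, add_div, mul_div_assoc]

lemma inn_add_smul_self (a v : V → ℝ) (t : ℝ) :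
    inn H (a + t • v) (a + t • v) = inn H a a + t * (2 * inn H a v) + t ^ 2 * inn H v v := by
  simp only [inn_add_left, inn_add_right, inn_smul_left, inn_smul_right, inn_comm v a]
  ring

/-- Danskin: each edge maximum `osc e` has a one-sided derivative given by a maximizing pair,
and these pairs assemble an element of `𝓛(g)`. -/
theorem exists_mem_NL_energy_add_smul_le (g v : V → ℝ) :
    ∃ u ∈ NL H g, ∀ᶠ t in 𝓝[>] (0 : ℝ),
      energy H (g + t • v) ≤ energy H g + t * inn H u v + t ^ 2 * energy H v := by
  have hedge := fun e (he : e ∈ H.E) =>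
    exists_osc_eq_eventually_osc_add_smul_le (H.e_nonempty e he) (Dinv H g) (Dinv H v)
  choose x hx y hy hosc hev using hedge
  set b : Finset V → V → ℝ :=
    fun e => if he : e ∈ H.E then delta (x e he) - delta (y e he) else 0
  have hb : ∀ e (he : e ∈ H.E), b e = delta (x e he) - delta (y e he) := fun e he => dif_pos he
  have hbv : ∀ e (he : e ∈ H.E), dot (b e) (Dinv H v) = Dinv H v (x e he) - Dinv H v (y e he) :=
    fun e he => by rw [hb e he, dot_delta_sub_delta]
  refine ⟨∑ e ∈ H.E, (H.w e * osc e (Dinv H g)) • b e,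
    mem_NL_iff.2 ⟨b, fun e he => ?_, rfl⟩, ?_⟩
  · rw [hb e he, mem_argmaxBp_iff (H.e_nonempty e he), dot_delta_sub_delta, hosc e he]
    exact ⟨delta_sub_delta_mem_Bp (hx e he) (hy e he), rfl⟩
  have hev' : ∀ e ∈ H.E, ∀ᶠ t in 𝓝[>] (0 : ℝ),
      osc e (Dinv H (g + t • v)) ≤ osc e (Dinv H g) + t * dot (b e) (Dinv H v) := fun e he => by
    simpa only [Dinv_add_smul, hbv e he] using hev e he
  filter_upwards [(eventually_all_finset H.E).2 hev'] with t ht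
  have hedge' : ∀ e ∈ H.E, H.w e * osc e (Dinv H (g + t • v)) ^ 2
      ≤ H.w e * osc e (Dinv H g) ^ 2 + 2 * t * (H.w e * osc e (Dinv H g) * dot (b e) (Dinv H v))
      + t ^ 2 * (H.w e * osc e (Dinv H v) ^ 2) := fun e he => by
    have hd : |dot (b e) (Dinv H v)| ≤ osc e (Dinv H v) := by
      rw [hbv e he]
      exact abs_sub_le_osc (hx e he) (hy e he) _
    have := sq_le_sq_add_mul_add_sq (osc_nonneg (H.e_nonempty e he) _) (ht e he) hd
    nlinarith [mul_le_mul_of_nonneg_left this (H.w_pos e he).le]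
  have hsum := Finset.sum_le_sum hedge'
  simp only [Finset.sum_add_distrib, ← Finset.mul_sum] at hsum
  rw [inn_eq_dot_Dinv, dot_sum_smul]
  unfold energy
  linarith

variable (hdeg : ∀ x, 0 < deg H x)
include hdeg

lemma exists_inn_eq_apply (φ : (V → ℝ) →ₗ[ℝ] ℝ) : ∃ v, ∀ b, φ b = inn H b v := by
  refine ⟨fun z => deg H z * φ (delta z), fun b => ?_⟩
  rw [LinearMap.pi_apply_eq_sum_univ φ b]
  refine Finset.sum_congr rfl fun x _ => ?_
  have hx : (fun j => if x = j then (1 : ℝ) else 0) = delta x :=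
    funext fun j => by simp only [delta, eq_comm]
  rw [hx, smul_eq_mul, mul_div_assoc, mul_div_cancel_left₀ _ (hdeg x).ne']

lemma exists_forall_le_of_inn_sub_le {Φ : (V → ℝ) → ℝ} (hΦ : Continuous Φ) (f : V → ℝ)
    (hcoer : ∀ p, inn H (p - f) (p - f) ≤ Φ p) : ∃ g, ∀ p, Φ g ≤ Φ p :=
  hΦ.exists_forall_le' f <| by
    filter_upwards [(isCompact_inn_sub_le hdeg f (Φ f)).compl_mem_cocompact] with p
      (hp : ¬inn H (p - f) (p - f) ≤ Φ f)
    exact (not_le.1 hp).le.trans (hcoer p)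

/-- Existence for the resolvent: a minimizer `g` of `‖p - f‖² + 2λ·energy p` satisfies
`f ∈ g + λ𝓛(g)`; otherwise a functional separating `(f - g)/λ` from `𝓛(g)` is a descent
direction. -/
theorem exists_resolvent {l : ℝ} (hl : 0 < l) (f : V → ℝ) :
    ∃ g, ∃ h ∈ NL H g, f = g + l • h := by
  obtain ⟨g, hg⟩ := exists_forall_le_of_inn_sub_le hdeg
    (Φ := fun p => inn H (p - f) (p - f) + 2 * l * energy H p)
    ((continuous_inn_self.comp (continuous_sub_right f)).add
      (continuous_const.mul continuous_energy)) f
    fun p => le_add_of_nonneg_right (mul_nonneg (by positivity) (energy_nonneg p))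
  refine ⟨g, l⁻¹ • (f - g), ?_,
    by rw [smul_smul, mul_inv_cancel₀ hl.ne', one_smul, add_sub_cancel]⟩
  by_contra hnot
  obtain ⟨φ, c, hsep, hc⟩ :=
    geometric_hahn_banach_closed_point (convex_NL g) (isCompact_NL g).isClosed hnot
  obtain ⟨v, hv⟩ : ∃ v, ∀ b, φ b = inn H b v :=
    exists_inn_eq_apply hdeg (φ : (V → ℝ) →ₗ[ℝ] ℝ)
  obtain ⟨u, hu, hexp⟩ := exists_mem_NL_energy_add_smul_le g v
  have hfirst : 0 ≤ 2 * (inn H (g - f) v + l * inn H u v) := by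
    refine nonneg_of_eventually_nonneg_mul_add_sq (C := inn H v v + 2 * l * energy H v) ?_
    filter_upwards [hexp] with t ht
    have hmin : inn H (g - f) (g - f) + 2 * l * energy H g
        ≤ inn H (g - f + t • v) (g - f + t • v) + 2 * l * energy H (g + t • v) := by
      simpa only [sub_add_eq_add_sub] using hg (g + t • v)
    rw [inn_add_smul_self] at hmin
    nlinarith [mul_le_mul_of_nonneg_left ht (by positivity : (0 : ℝ) ≤ 2 * l)]
  have hsep' : inn H u v < l⁻¹ * (inn H f v - inn H g v) := by
    have := (hsep u hu).trans hc
    simpa only [hv, inn_smul_left, inn_sub_left] using this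
  rw [inn_sub_left] at hfirst
  have := mul_lt_mul_of_pos_left hsep' hl
  rw [← mul_assoc, mul_inv_cancel₀ hl.ne', one_mul] at this
  linarith

lemma resolvent_spec {l : ℝ} (hl : 0 < l) (f : V → ℝ) :
    ∃ h ∈ NL H (Resolvent H l f), f = Resolvent H l f + l • h :=
  Classical.epsilon_spec (exists_resolvent hdeg hl f)

omit hdeg in
lemma inn_sub_self_le_of_mem_NL {l : ℝ} (hl : 0 ≤ l) {g₁ g₂ h₁ h₂ : V → ℝ}
    (hh₁ : h₁ ∈ NL H g₁) (hh₂ : h₂ ∈ NL H g₂) :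
    inn H (g₁ - g₂) (g₁ - g₂) ≤ inn H (g₁ + l • h₁ - (g₂ + l • h₂)) (g₁ - g₂) := by
  have hsplit : g₁ + l • h₁ - (g₂ + l • h₂) = g₁ - g₂ + l • (h₁ - h₂) := by module
  rw [hsplit, inn_add_left, inn_smul_left]
  nlinarith [mul_nonneg hl (NL_monotone hh₁ hh₂)]

lemma resolvent_eq_of_mem_NL {l : ℝ} (hl : 0 < l) {f g h : V → ℝ} (hh : h ∈ NL H g)
    (hf : f = g + l • h) : Resolvent H l f = g := by
  obtain ⟨h', hh', hf'⟩ := resolvent_spec hdeg hl f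
  have := inn_sub_self_le_of_mem_NL hl.le hh' hh
  rw [← hf', ← hf, sub_self, inn_zero_left] at this
  exact sub_eq_zero.1 ((inn_self_eq_zero hdeg).1 (le_antisymm this (inn_self_nonneg hdeg _)))

lemma nrm_resolvent_sub_le {l : ℝ} (hl : 0 < l) (f₁ f₂ : V → ℝ) :
    nrm H (Resolvent H l f₁ - Resolvent H l f₂) ≤ nrm H (f₁ - f₂) := by
  obtain ⟨h₁, hh₁, hf₁⟩ := resolvent_spec hdeg hl f₁
  obtain ⟨h₂, hh₂, hf₂⟩ := resolvent_spec hdeg hl f₂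
  refine nrm_le_of_inn_self_le hdeg ?_
  have := inn_sub_self_le_of_mem_NL hl.le hh₁ hh₂
  rwa [← hf₁, ← hf₂] at this

lemma resolvent_smul_deg {l : ℝ} (hl : 0 < l) (c : ℝ) :
    Resolvent H l (c • deg H) = c • deg H := by
  obtain ⟨h, hh⟩ := NL_nonempty (H := H) (c • deg H)
  have hD : Dinv H (c • deg H) = fun _ => c :=
    funext fun x => by simp [Dinv, (hdeg x).ne']
  have h0 : h = 0 := by
    obtain ⟨b, -, rfl⟩ := mem_NL_iff.1 hh
    refine Finset.sum_eq_zero fun e he => ?_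
    rw [hD, osc_const (H.e_nonempty e he), mul_zero, zero_smul]
  exact resolvent_eq_of_mem_NL hdeg hl hh (by rw [h0, smul_zero, add_zero])

end Resolvent

section Yosida

def yosida (H : Hypergraph V) (l : ℝ) (f : V → ℝ) : V → ℝ :=
  l⁻¹ • (f - Resolvent H l f)

lemma resolvent_eq_sub_smul_yosida {l : ℝ} (hl : l ≠ 0) (f : V → ℝ) :
    Resolvent H l f = f - l • yosida H l f := by
  rw [yosida, smul_smul, mul_inv_cancel₀ hl, one_smul, sub_sub_cancel]

variable (hdeg : ∀ x, 0 < deg H x)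
include hdeg

lemma yosida_mem_NL {l : ℝ} (hl : 0 < l) (f : V → ℝ) :
    yosida H l f ∈ NL H (Resolvent H l f) := by
  obtain ⟨h, hh, hf⟩ := resolvent_spec hdeg hl f
  rwa [yosida, sub_eq_iff_eq_add'.2 hf, smul_smul, inv_mul_cancel₀ hl.ne', one_smul]

lemma nrm_yosida_le {l : ℝ} (hl : 0 < l) {f u : V → ℝ} (hu : u ∈ NL H f) :
    nrm H (yosida H l f) ≤ nrm H u := by
  refine nrm_le_of_inn_self_le hdeg ?_
  have hmono := NL_monotone (yosida_mem_NL hdeg hl f) hu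
  rw [resolvent_eq_sub_smul_yosida hl.ne', sub_sub_cancel_left, ← neg_smul, inn_smul_right,
    inn_sub_left] at hmono
  nlinarith

lemma neg_mul_le_inn_yosida_sub {l : ℝ} (hl : 0 < l) {g h : V → ℝ} (hh : h ∈ NL H g)
    (f : V → ℝ) : -(l * (nrm H h * nrm H (L0 H f))) ≤ inn H (yosida H l f - h) (f - g) := by
  have hmono := NL_monotone (yosida_mem_NL hdeg hl f) hh
  rw [resolvent_eq_sub_smul_yosida hl.ne', sub_right_comm, inn_sub_right, inn_smul_right] at hmono
  have hAh := inn_sub_left (H := H) (yosida H l f) h (yosida H l f)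
  have hcs := (inn_le_nrm_mul_nrm hdeg h (yosida H l f)).trans
    (mul_le_mul_of_nonneg_left (nrm_yosida_le hdeg hl (L0_spec f).1) (nrm_nonneg h))
  nlinarith [mul_le_mul_of_nonneg_left hcs hl.le,
    mul_nonneg hl.le (inn_self_nonneg hdeg (yosida H l f))]

/-- Minty's trick: `𝓛` is maximal monotone, since `I + 𝓛` is onto. -/
theorem mem_NL_of_forall_inn_nonneg {f a : V → ℝ}
    (h : ∀ g h', h' ∈ NL H g → 0 ≤ inn H (a - h') (f - g)) : a ∈ NL H f := by
  obtain ⟨g, h', hh', hfa⟩ := exists_resolvent hdeg one_pos (f + a)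
  rw [one_smul] at hfa
  have hag : a - h' = g - f := sub_eq_sub_iff_add_eq_add.2 (by rw [add_comm, hfa])
  have hle := h g h' hh'
  rw [hag, inn_sub_right] at hle
  have hX : inn H (g - f) (g - f) ≤ 0 := by
    rw [inn_sub_right]
    linarith
  have hgf : g = f :=
    sub_eq_zero.1 ((inn_self_eq_zero hdeg).1 (le_antisymm hX (inn_self_nonneg hdeg _)))
  rw [hgf, sub_self, sub_eq_zero] at hag
  rwa [hag, ← hgf]

lemma inn_sub_nonneg_of_mapClusterPt {f a g h : V → ℝ} (hh : h ∈ NL H g)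
    (ha : MapClusterPt a (𝓝[>] 0) fun l => yosida H l f) : 0 ≤ inn H (a - h) (f - g) := by
  set C := nrm H h * nrm H (L0 H f)
  refine le_of_forall_pos_le_add fun ε hε => ?_
  have hlim : Tendsto (fun l : ℝ => l * C) (𝓝[>] 0) (𝓝 0) := by
    simpa using ((continuous_mul_const C).tendsto 0).mono_left nhdsWithin_le_nhds
  have hclosed : IsClosed {b : V → ℝ | 0 ≤ inn H (b - h) (f - g) + ε} :=
    isClosed_le continuous_const
      (((continuous_inn_left (f - g)).comp (continuous_sub_right h)).add continuous_const)
  refine hclosed.mem_of_mapClusterPt ha ?_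
  filter_upwards [self_mem_nhdsWithin, hlim.eventually_lt_const hε] with l (hl : 0 < l) hlC
  have := neg_mul_le_inn_yosida_sub hdeg hl hh f
  show 0 ≤ inn H (yosida H l f - h) (f - g) + ε
  linarith

theorem tendsto_yosida_L0 (f : V → ℝ) :
    Tendsto (fun l => yosida H l f) (𝓝[>] 0) (𝓝 (L0 H f)) := by
  set N := nrm H (L0 H f)
  refine (isCompact_inn_sub_le hdeg 0 (N ^ 2)).tendsto_nhds_of_unique_mapClusterPt ?_
    fun a ha hclust => ?_
  · filter_upwards [self_mem_nhdsWithin] with l (hl : 0 < l)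
    show inn H (yosida H l f - 0) (yosida H l f - 0) ≤ N ^ 2
    rw [sub_zero, ← sq_nrm hdeg]
    exact pow_le_pow_left₀ (nrm_nonneg _) (nrm_yosida_le hdeg hl (L0_spec f).1) 2
  · refine eq_L0_of_nrm_le hdeg (mem_NL_of_forall_inn_nonneg hdeg
      fun g h hh => inn_sub_nonneg_of_mapClusterPt hdeg hh hclust) ?_
    have ha' : inn H (a - 0) (a - 0) ≤ N ^ 2 := ha
    rw [sub_zero, ← sq_nrm hdeg] at ha'
    exact (pow_le_pow_iff_left₀ (nrm_nonneg _) (nrm_nonneg _) two_ne_zero).1 ha'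

end Yosida

section Curvature

lemma gdist_le_hdiam (x y : V) : gdist H x y ≤ hdiam H := by
  unfold gdist hdiam
  exact_mod_cast Finset.le_sup (f := fun p : V × V => hdistN H p.1 p.2) (Finset.mem_univ (x, y))

lemma gdist_pos (hconn : Connected H) {x y : V} (hxy : x ≠ y) : 0 < gdist H x y := by
  have hmem : hdistN H x y ∈ {n | chainProp H x y n} := Nat.sInf_mem (hconn x y)
  refine Nat.cast_pos.2 (Nat.pos_of_ne_zero fun h0 => ?_)
  rw [h0] at hmem
  obtain ⟨z, hz0, hzn, -⟩ := hmem
  exact hxy (hz0.symm.trans hzn)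

lemma abs_Dinv_sub_le_hdiam {f : V → ℝ} (hf : f ∈ Lip1 H) (y z : V) :
    |Dinv H f z - Dinv H f y| ≤ hdiam H := by
  have hzy := hf z y
  have hyz := hf y z
  rw [inn_delta_sub_delta] at hzy hyz
  exact abs_sub_le_iff.2 ⟨hzy.trans (gdist_le_hdiam z y), hyz.trans (gdist_le_hdiam y z)⟩

variable (hdeg : ∀ x, 0 < deg H x)
include hdeg

lemma inn_sub_smul_deg_le {f : V → ℝ} (hf : f ∈ Lip1 H) (y : V) :
    inn H (f - Dinv H f y • deg H) (f - Dinv H f y • deg H) ≤ vol H * hdiam H ^ 2 := by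
  rw [vol, Finset.sum_mul]
  refine Finset.sum_le_sum fun z _ => ?_
  have hz : (f - Dinv H f y • deg H) z * (f - Dinv H f y • deg H) z / deg H z
      = deg H z * (Dinv H f z - Dinv H f y) ^ 2 := by
    simp only [Pi.sub_apply, Pi.smul_apply, smul_eq_mul, Dinv]
    field_simp [(hdeg z).ne']
  rw [hz, ← sq_abs (Dinv H f z - Dinv H f y)]
  exact mul_le_mul_of_nonneg_left
    (pow_le_pow_left₀ (abs_nonneg _) (abs_Dinv_sub_le_hdiam hf y z) 2) (hdeg z).le

/-- The set in the definition of `KD` is bounded above, so the junk value of `sSup` never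
occurs. Compare with the resolvent's fixed point `c • deg H`, with `c` chosen so that `f` is
close to it. -/
lemma bddAbove_KD {l : ℝ} (hl : 0 < l) (x y : V) :
    BddAbove {r | ∃ f ∈ Lip1 H, r = inn H (Resolvent H l f) (delta x - delta y)} := by
  refine ⟨√(vol H * hdiam H ^ 2) * nrm H (delta x - delta y), ?_⟩
  rintro _ ⟨f, hf, rfl⟩
  set f₀ := Dinv H f y • deg H
  have hJ₀ : inn H (Resolvent H l f₀) (delta x - delta y) = 0 := by
    have hD : ∀ z, Dinv H f₀ z = Dinv H f y := fun z => by simp [f₀, Dinv, (hdeg z).ne']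
    rw [resolvent_smul_deg hdeg hl, inn_delta_sub_delta, hD, hD, sub_self]
  calc inn H (Resolvent H l f) (delta x - delta y)
      = inn H (Resolvent H l f - Resolvent H l f₀) (delta x - delta y) := by
        rw [inn_sub_left, hJ₀, sub_zero]
    _ ≤ nrm H (Resolvent H l f - Resolvent H l f₀) * nrm H (delta x - delta y) :=
        inn_le_nrm_mul_nrm hdeg _ _
    _ ≤ √(vol H * hdiam H ^ 2) * nrm H (delta x - delta y) :=
        mul_le_mul_of_nonneg_right ((nrm_resolvent_sub_le hdeg hl f f₀).trans
          (Real.sqrt_le_sqrt (inn_sub_smul_deg_le hdeg hf y))) (nrm_nonneg _)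

lemma kappa_div_le_inn_yosida {f : V → ℝ} (hf : f ∈ Lip1 H) {x y : V}
    (hpot : inn H f (delta x - delta y) = gdist H x y) (hd : 0 < gdist H x y) {l : ℝ}
    (hl : 0 < l) :
    kappa H l x y / l ≤ inn H (yosida H l f) (delta x - delta y) / gdist H x y := by
  have hKD : inn H (Resolvent H l f) (delta x - delta y) ≤ KD H l x y :=
    le_csSup (bddAbove_KD hdeg hl x y) ⟨f, hf, rfl⟩
  have hkappa : kappa H l x y
      ≤ (gdist H x y - inn H (Resolvent H l f) (delta x - delta y)) / gdist H x y := by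
    rw [kappa, sub_div, div_self hd.ne']
    gcongr
  rw [yosida, inn_smul_left, inn_sub_left, hpot]
  calc kappa H l x y / l
      ≤ (gdist H x y - inn H (Resolvent H l f) (delta x - delta y)) / gdist H x y / l := by
        gcongr
    _ = _ := by ring

end Curvature

end

theorem stmt12_general (H : Hypergraph V) (hconn : Connected H)
    (hdeg : ∀ x : V, 0 < deg H x) (x y : V) (hxy : x ≠ y)
    (f : V → ℝ) (hf : f ∈ Lip1 H)
    (hpot : inn H f (delta x - delta y) = gdist H x y) :
    kappaUpper H x y ≤ ((inn H (L0 H f) (delta x - delta y) / gdist H x y : ℝ) : EReal) ∧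
    kappaUpper H x y < ⊤ := by
  have hlim : Tendsto (fun l => inn H (yosida H l f) (delta x - delta y) / gdist H x y)
      (𝓝[>] 0) (𝓝 (inn H (L0 H f) (delta x - delta y) / gdist H x y)) :=
    (((continuous_inn_left _).tendsto _).comp (tendsto_yosida_L0 hdeg f)).div_const _
  have hle :
      kappaUpper H x y ≤ ((inn H (L0 H f) (delta x - delta y) / gdist H x y : ℝ) : EReal) := by
    rw [← (EReal.tendsto_coe.2 hlim).limsup_eq]
    refine limsup_le_limsup ?_
    filter_upwards [self_mem_nhdsWithin] with l (hl : 0 < l)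
    exact EReal.coe_le_coe_iff.2
      (kappa_div_le_inn_yosida hdeg hf hpot (gdist_pos hconn hxy) hl)
  exact ⟨hle, hle.trans_lt (EReal.coe_lt_top _)⟩

/-- if `f` is weighted 1-Lipschitz with `⟨f, δ_x − δ_y⟩ = d(x,y)`,
then `κ̄(x,y) ≤ ⟨𝓛⁰f, δ_x − δ_y⟩ / d(x,y)`; in particular `κ̄(x,y) < ∞`. -/
theorem stmt12 [Nonempty V] (H : Hypergraph V) (hconn : Connected H)
    (hdeg : ∀ x : V, 0 < deg H x) (x y : V) (hxy : x ≠ y)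
    (f : V → ℝ) (hf : f ∈ Lip1 H)
    (hpot : inn H f (delta x - delta y) = gdist H x y) :
    kappaUpper H x y ≤ ((inn H (L0 H f) (delta x - delta y) / gdist H x y : ℝ) : EReal) ∧
    kappaUpper H x y < ⊤ :=
  stmt12_general H hconn hdeg x y hxy f hf hpot

end HypRicci
end
end

section
/- Assume #V ≥ 2. Setting κ_λ := min_{x≠y} κ_λ(x,y) for each λ > 0, one has liminf_{λ↓0} κ_λ/λ = min_{x≠y} κ̲(x,y). -/
open scoped BigOperators

noncomputable section

namespace HypRicci

variable {V : Type*} [Fintype V] [DecidableEq V]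

/-!
The minimum over the finitely many pairs `x ≠ y` is a finite `inf'`; dividing by `λ > 0` and
coercing to `EReal` are monotone, so they commute with it, and `liminf` of a finite `inf'` is the
`inf'` of the `liminf`s in the complete linear order `EReal`.
-/

open Filter Finset

section OffDiag

variable {ι β : Type*} [Fintype ι]

lemma setOf_ne_eq_image_offDiag (F : ι → ι → β) :
    {r | ∃ x y : ι, x ≠ y ∧ r = F x y} =
      (fun p : ι × ι => F p.1 p.2) '' ((univ : Finset ι).offDiag : Set (ι × ι)) := by
  ext r
  simp only [Set.mem_ofPred_eq, Set.mem_image, mem_coe, mem_offDiag, mem_univ, true_and,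
    Prod.exists]
  exact exists₂_congr fun x y => and_congr_right fun _ => eq_comm

lemma univ_offDiag_nonempty (hι : 2 ≤ Fintype.card ι) :
    (univ : Finset ι).offDiag.Nonempty := by
  obtain ⟨a, b, hab⟩ := Fintype.exists_pair_of_one_lt_card hι
  exact ⟨(a, b), mem_offDiag.2 ⟨mem_univ a, mem_univ b, hab⟩⟩

lemma sInf_setOf_ne_eq_inf' [ConditionallyCompleteLattice β]
    (hP : (univ : Finset ι).offDiag.Nonempty) (F : ι → ι → β) :
    sInf {r | ∃ x y : ι, x ≠ y ∧ r = F x y} =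
      (univ : Finset ι).offDiag.inf' hP fun p => F p.1 p.2 := by
  rw [setOf_ne_eq_image_offDiag, inf'_eq_csInf_image]

end OffDiag

lemma coe_inf'_div_eq_inf' {ι : Type*} {s : Finset ι} (hs : s.Nonempty) (f : ι → ℝ)
    {l : ℝ} (hl : 0 < l) :
    ((s.inf' hs f / l : ℝ) : EReal) = s.inf' hs fun i => ((f i / l : ℝ) : EReal) :=
  apply_inf'_eq_inf'_comp hs (fun r : ℝ => ((r / l : ℝ) : EReal)) fun _ _ =>
    Monotone.map_min fun _ _ h => EReal.coe_le_coe_iff.2 (div_le_div_of_nonneg_right h hl.le)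

theorem stmt15_general (H : Hypergraph V) (hV : 2 ≤ Fintype.card V) :
    Filter.liminf
        (fun l : ℝ =>
          ((sInf {r : ℝ | ∃ x y : V, x ≠ y ∧ r = kappa H l x y} / l : ℝ) : EReal))
        (nhdsWithin 0 (Set.Ioi 0))
      = sInf {r : EReal | ∃ x y : V, x ≠ y ∧ r = kappaLower H x y} := by
  have hP := univ_offDiag_nonempty hV
  have hmin : ∀ l ∈ Set.Ioi (0 : ℝ),
      ((sInf {r : ℝ | ∃ x y : V, x ≠ y ∧ r = kappa H l x y} / l : ℝ) : EReal) =
        (univ : Finset V).offDiag.inf' hP fun p => ((kappa H l p.1 p.2 / l : ℝ) : EReal) :=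
    fun l hl => by rw [sInf_setOf_ne_eq_inf' hP, coe_inf'_div_eq_inf' hP _ hl]
  rw [liminf_congr (eventually_mem_nhdsWithin.mono hmin), liminf_finset_inf' hP,
    sInf_setOf_ne_eq_inf' hP]
  rfl

/-- with `κ_λ := min_{x≠y} κ_λ(x,y)`, one has
`liminf_{λ↓0} κ_λ/λ = min_{x≠y} κ̲(x,y)`. -/
theorem stmt15 [Nonempty V] (H : Hypergraph V) (hconn : Connected H)
    (hdeg : ∀ x : V, 0 < deg H x) (hV : 2 ≤ Fintype.card V) :
    Filter.liminf
        (fun l : ℝ =>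
          ((sInf {r : ℝ | ∃ x y : V, x ≠ y ∧ r = kappa H l x y} / l : ℝ) : EReal))
        (nhdsWithin 0 (Set.Ioi 0))
      = sInf {r : EReal | ∃ x y : V, x ≠ y ∧ r = kappaLower H x y} :=
  stmt15_general H hV

end HypRicci
end
end
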